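/- arXiv:2503.11996 — 3 statements merged into one kernel-verified Lean document; each statement's English description precedes it below -/
import Mathlib

section
/- Let G be a finite simple graph with no isolated vertex. Then there exists a minimum ev-dominating set M of G such that no two distinct edges of M share a vertex; consequently, γ_pr(G) ≤ 2·γ_ev(G). -/
open SimpleGraph

variable {V : Type*}

/-- `D` is a dominating set of `G`: every vertex outside `D` has a neighbor in `D`. -/
def IsDomSet (G : SimpleGraph V) (D : Set V) : Prop :=
  ∀ v ∉ D, ∃ u ∈ D, G.Adj u v

/-- The edge `e` ev-dominates the vertex `v`: `e` is incident to `v` or to a neighbor of `v`. -/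
def EvDom (G : SimpleGraph V) (e : Sym2 V) (v : V) : Prop :=
  v ∈ e ∨ ∃ u ∈ e, G.Adj u v

/-- `M` is an edge-vertex dominating set of `G`. -/
def IsEvDomSet (G : SimpleGraph V) (M : Set (Sym2 V)) : Prop :=
  M ⊆ G.edgeSet ∧ ∀ v : V, ∃ e ∈ M, EvDom G e v

/-- `M` is a minimum edge-vertex dominating set of `G`. -/
def IsMinEvDomSet (G : SimpleGraph V) (M : Set (Sym2 V)) : Prop :=
  IsEvDomSet G M ∧ ∀ M' : Set (Sym2 V), IsEvDomSet G M' → M.ncard ≤ M'.ncard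

/-- The edge-vertex domination number `γ_ev(G)`. -/
noncomputable def evNum (G : SimpleGraph V) : ℕ :=
  sInf {n | ∃ M : Set (Sym2 V), IsEvDomSet G M ∧ M.ncard = n}

/-- The set of all endpoints of edges in `M`. -/
def edgeVerts (M : Set (Sym2 V)) : Set V := {v | ∃ e ∈ M, v ∈ e}

/-- `M` is a perfect matching of the induced subgraph `G[D]`: a set of edges of `G`
with all endpoints in `D`, such that every vertex of `D` lies in exactly one edge of `M`. -/
def IsPMOn (G : SimpleGraph V) (D : Set V) (M : Set (Sym2 V)) : Prop :=
  M ⊆ G.edgeSet ∧ (∀ e ∈ M, ∀ v ∈ e, v ∈ D) ∧ ∀ v ∈ D, ∃! e, e ∈ M ∧ v ∈ e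

/-- `D` is a paired-dominating set of `G`. -/
def IsPairedDomSet (G : SimpleGraph V) (D : Set V) : Prop :=
  IsDomSet G D ∧ ∃ M : Set (Sym2 V), IsPMOn G D M

/-- `D` is a minimum paired-dominating set of `G`. -/
def IsMinPairedDomSet (G : SimpleGraph V) (D : Set V) : Prop :=
  IsPairedDomSet G D ∧ ∀ D' : Set V, IsPairedDomSet G D' → D.ncard ≤ D'.ncard

/-- The paired-domination number `γ_pr(G)`. -/
noncomputable def prNum (G : SimpleGraph V) : ℕ :=
  sInf {n | ∃ D : Set V, IsPairedDomSet G D ∧ D.ncard = n}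

/-- No two distinct edges of `M` share a vertex. -/
def NoSharedVertex (M : Set (Sym2 V)) : Prop :=
  ∀ e ∈ M, ∀ f ∈ M, e ≠ f → ∀ v : V, v ∈ e → v ∉ f

/-- `G` has no isolated vertex. -/
def NoIsolated (G : SimpleGraph V) : Prop := ∀ v : V, ∃ u, G.Adj u v

/-!
Take a minimum ev-dominating set `M` whose edges cover as many vertices as possible. If two of
its edges met at `v`, say `e` and `s(v, w)`, then `e` already ev-dominates everything
`s(v, w)` does except neighbours of `w`. So either `w` has a neighbour `x` not covered by `M`,
and trading `s(v, w)` for `s(w, x)` covers more vertices, or it has none and `s(v, w)` can be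
dropped. Hence the edges of `M` are pairwise disjoint, and their `2 γ_ev(G)` endpoints form a
paired-dominating set.
-/

namespace SimpleGraph

variable {G : SimpleGraph V} {M : Set (Sym2 V)}

lemma isEvDomSet_edgeSet (hG : NoIsolated G) : IsEvDomSet G G.edgeSet := by
  refine ⟨subset_rfl, fun v => ?_⟩
  obtain ⟨u, hu⟩ := hG v
  exact ⟨s(u, v), hu, Or.inl (Sym2.mem_mk_right u v)⟩

lemma exists_isMinEvDomSet (hG : NoIsolated G) : ∃ M, IsMinEvDomSet G M := by
  obtain ⟨M, hM, hcard⟩ := Nat.sInf_mem (s := {n | ∃ M, IsEvDomSet G M ∧ M.ncard = n})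
    ⟨_, G.edgeSet, isEvDomSet_edgeSet hG, rfl⟩
  exact ⟨M, hM, fun M' hM' => hcard ▸ Nat.sInf_le ⟨M', hM', rfl⟩⟩

lemma IsMinEvDomSet.ncard_eq_evNum (hM : IsMinEvDomSet G M) : M.ncard = evNum G :=
  le_antisymm
    (le_csInf ⟨_, M, hM.1, rfl⟩ (by rintro _ ⟨M', hM', rfl⟩; exact hM.2 M' hM'))
    (Nat.sInf_le ⟨M, hM.1, rfl⟩)

lemma exists_isMinEvDomSet_forall_ncard_edgeVerts_le [Finite V] (hG : NoIsolated G) :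
    ∃ M, IsMinEvDomSet G M ∧
      ∀ M', IsMinEvDomSet G M' → (edgeVerts M').ncard ≤ (edgeVerts M).ncard :=
  Set.exists_max_image {M | IsMinEvDomSet G M} (fun M => (edgeVerts M).ncard)
    (Set.toFinite _) (exists_isMinEvDomSet hG)

lemma IsEvDomSet.evDom_diff_or_adj (hM : IsEvDomSet G M) {e : Sym2 V} {v w : V}
    (heM : e ∈ M) (hne : e ≠ s(v, w)) (hve : v ∈ e) (hvw : G.Adj v w) (y : V) :
    (∃ g ∈ M \ {s(v, w)}, EvDom G g y) ∨ G.Adj w y := by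
  obtain ⟨g, hgM, hgy⟩ := hM.2 y
  by_cases hgf : g = s(v, w)
  · subst hgf
    have he : e ∈ M \ {s(v, w)} := ⟨heM, hne⟩
    rcases hgy with hy | ⟨u, hu, huy⟩
    · rcases Sym2.mem_iff.mp hy with rfl | rfl
      · exact .inl ⟨e, he, .inl hve⟩
      · exact .inl ⟨e, he, .inr ⟨v, hve, hvw⟩⟩
    · rcases Sym2.mem_iff.mp hu with rfl | rfl
      · exact .inl ⟨e, he, .inr ⟨u, hve, huy⟩⟩
      · exact .inr huy
  · exact .inl ⟨g, ⟨hgM, hgf⟩, hgy⟩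

lemma IsEvDomSet.exchange (hM : IsEvDomSet G M) {e : Sym2 V} {v w x : V}
    (heM : e ∈ M) (hne : e ≠ s(v, w)) (hve : v ∈ e) (hvw : G.Adj v w) (hwx : G.Adj w x) :
    IsEvDomSet G (insert s(w, x) (M \ {s(v, w)})) := by
  refine ⟨Set.insert_subset hwx (Set.sdiff_subset.trans hM.1), fun y => ?_⟩
  rcases hM.evDom_diff_or_adj heM hne hve hvw y with ⟨g, hg, hgy⟩ | hwy
  · exact ⟨g, Set.mem_insert_of_mem _ hg, hgy⟩
  · exact ⟨s(w, x), Set.mem_insert _ _, .inr ⟨w, Sym2.mem_mk_left w x, hwy⟩⟩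

lemma IsEvDomSet.diff_singleton (hM : IsEvDomSet G M) {e : Sym2 V} {v w : V}
    (heM : e ∈ M) (hne : e ≠ s(v, w)) (hve : v ∈ e) (hvw : G.Adj v w)
    (hcov : ∀ y, G.Adj w y → y ∈ edgeVerts M) :
    IsEvDomSet G (M \ {s(v, w)}) := by
  refine ⟨Set.sdiff_subset.trans hM.1, fun y => ?_⟩
  rcases hM.evDom_diff_or_adj heM hne hve hvw y with h | hwy
  · exact h
  by_cases hyv : y = v
  · exact ⟨e, ⟨heM, hne⟩, .inl (hyv ▸ hve)⟩
  obtain ⟨g, hgM, hyg⟩ := hcov y hwy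
  have hgf : g ≠ s(v, w) := by
    rintro rfl
    rcases Sym2.mem_iff.mp hyg with rfl | rfl
    exacts [hyv rfl, G.irrefl hwy]
  exact ⟨g, ⟨hgM, hgf⟩, .inl hyg⟩

lemma IsMinEvDomSet.noSharedVertex [Finite V] (hM : IsMinEvDomSet G M)
    (hmax : ∀ M', IsMinEvDomSet G M' → (edgeVerts M').ncard ≤ (edgeVerts M).ncard) :
    NoSharedVertex M := by
  intro e heM f hfM hef v hve hvf
  obtain ⟨w, rfl⟩ : ∃ w, f = s(v, w) := (Sym2.mem_iff_exists).mp hvf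
  have hvw : G.Adj v w := hM.1.1 hfM
  by_cases hx : ∃ x, G.Adj w x ∧ x ∉ edgeVerts M
  · obtain ⟨x, hwx, hxM⟩ := hx
    have hwxM : s(w, x) ∉ M := fun h => hxM ⟨_, h, Sym2.mem_mk_right w x⟩
    set M' := insert s(w, x) (M \ {s(v, w)})
    have hmin' : IsMinEvDomSet G M' :=
      ⟨hM.1.exchange heM hef hve hvw hwx,
        fun M'' h'' => (Set.ncard_exchange hwxM hfM).symm ▸ hM.2 M'' h''⟩
    have hsub : edgeVerts M ⊆ edgeVerts M' := by
      rintro y ⟨g, hgM, hyg⟩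
      by_cases hgf : g = s(v, w)
      · subst hgf
        rcases Sym2.mem_iff.mp hyg with rfl | rfl
        · exact ⟨e, Set.mem_insert_of_mem _ ⟨heM, hef⟩, hve⟩
        · exact ⟨_, Set.mem_insert _ _, Sym2.mem_mk_left y x⟩
      · exact ⟨g, Set.mem_insert_of_mem _ ⟨hgM, hgf⟩, hyg⟩
    have hxM' : x ∈ edgeVerts M' := ⟨_, Set.mem_insert _ _, Sym2.mem_mk_right w x⟩
    exact (hmax M' hmin').not_gt
      (Set.ncard_lt_ncard ⟨hsub, fun h => hxM (h hxM')⟩ (Set.toFinite _))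
  · push Not at hx
    exact (hM.2 _ (hM.1.diff_singleton heM hef hve hvw hx)).not_gt (Set.ncard_sdiff_singleton_lt_of_mem hfM (Set.toFinite _))

lemma IsEvDomSet.isDomSet_edgeVerts (hM : IsEvDomSet G M) : IsDomSet G (edgeVerts M) := by
  intro y hy
  obtain ⟨g, hg, hyg | ⟨u, hu, huy⟩⟩ := hM.2 y
  · exact absurd ⟨g, hg, hyg⟩ hy
  · exact ⟨u, ⟨g, hg, hu⟩, huy⟩

lemma NoSharedVertex.isPMOn_edgeVerts (hM : M ⊆ G.edgeSet) (hns : NoSharedVertex M) :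
    IsPMOn G (edgeVerts M) M := by
  refine ⟨hM, fun e he v hv => ⟨e, he, hv⟩, ?_⟩
  rintro y ⟨g, hg, hyg⟩
  exact ⟨g, ⟨hg, hyg⟩, fun g' ⟨hg', hyg'⟩ => by_contra fun hne => hns g' hg' g hg hne y hyg' hyg⟩

lemma NoSharedVertex.ncard_edgeVerts [Finite V] (hM : M ⊆ G.edgeSet) (hns : NoSharedVertex M) :
    (edgeVerts M).ncard = 2 * M.ncard := by
  classical
  set F := (Set.toFinite M).toFinset
  have hverts : edgeVerts M = ↑(F.biUnion Sym2.toFinset) := by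
    ext v; simp [edgeVerts, F]
  have hdisj : (F : Set (Sym2 V)).PairwiseDisjoint Sym2.toFinset := by
    intro e he f hf hef
    simp only [Function.onFun, Finset.disjoint_left, Sym2.mem_toFinset]
    exact hns e (by simpa [F] using he) f (by simpa [F] using hf) hef
  have htwo : ∀ e ∈ F, (Sym2.toFinset e).card = 2 := fun e he =>
    Sym2.card_toFinset_of_not_isDiag e (G.not_isDiag_of_mem_edgeSet (hM (by simpa [F] using he)))
  rw [hverts, Set.ncard_coe_finset, Finset.card_biUnion hdisj, Finset.sum_congr rfl htwo,
    Finset.sum_const, smul_eq_mul, mul_comm, Set.ncard_eq_toFinset_card M]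

lemma NoSharedVertex.prNum_le (hM : IsEvDomSet G M) (hns : NoSharedVertex M) :
    prNum G ≤ (edgeVerts M).ncard :=
  Nat.sInf_le ⟨_, ⟨hM.isDomSet_edgeVerts, M, hns.isPMOn_edgeVerts hM.1⟩, rfl⟩

end SimpleGraph

theorem stmt15 [Fintype V] (G : SimpleGraph V) (hG : NoIsolated G) :
    (∃ M : Set (Sym2 V), IsMinEvDomSet G M ∧ NoSharedVertex M) ∧
      prNum G ≤ 2 * evNum G := by
  obtain ⟨M, hM, hmax⟩ := exists_isMinEvDomSet_forall_ncard_edgeVerts_le hG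
  have hns := hM.noSharedVertex hmax
  refine ⟨⟨M, hM, hns⟩, ?_⟩
  calc prNum G ≤ (edgeVerts M).ncard := hns.prNum_le hM.1
    _ = 2 * evNum G := by rw [hns.ncard_edgeVerts hM.1.1, hM.ncard_eq_evNum]
end

section
/- Let M be a minimum ev-dominating set of a finite simple graph G, and suppose e₁ = x₁x₂ and e₂ = x₂x₃ are two distinct edges of M sharing the vertex x₂. Then there exists a vertex x₀ adjacent to x₁ such that x₀ is ev-dominated by e₁ and by no other edge of M; moreover, (M \ {e₁}) ∪ {x₀x₁} is also a minimum ev-dominating set of G. -/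
open SimpleGraph

variable {V : Type*}

theorem stmt16 [Fintype V] (G : SimpleGraph V) (M : Set (Sym2 V))
    (hM : IsMinEvDomSet G M) (x₁ x₂ x₃ : V)
    (he₁ : s(x₁, x₂) ∈ M) (he₂ : s(x₂, x₃) ∈ M) (hne : s(x₁, x₂) ≠ s(x₂, x₃)) :
    ∃ x₀ : V, G.Adj x₀ x₁ ∧ EvDom G s(x₁, x₂) x₀ ∧
      (∀ e ∈ M, e ≠ s(x₁, x₂) → ¬ EvDom G e x₀) ∧
      IsMinEvDomSet G ((M \ {s(x₁, x₂)}) ∪ {s(x₀, x₁)}) := by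
  
  obtain ⟨⟨hMsub, hMdom⟩, hMmin⟩ := hM
  have hadj12 : G.Adj x₁ x₂ := hMsub he₁
  have hne' : s(x₂, x₃) ≠ s(x₁, x₂) := hne.symm
  have hpriv : ∃ v, ∀ e ∈ M, e ≠ s(x₁, x₂) → ¬ EvDom G e v := by
    by_contra h
    push_neg at h
    have hset : IsEvDomSet G (M \ {s(x₁, x₂)}) := by
      refine ⟨Set.diff_subset.trans hMsub, fun v => ?_⟩
      obtain ⟨e, he, hnee, hdom⟩ := h v
      exact ⟨e, ⟨he, hnee⟩, hdom⟩
    have h1 := hMmin _ hset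
    have h2 : (M \ {s(x₁, x₂)}).ncard < M.ncard :=
      Set.ncard_diff_singleton_lt_of_mem he₁ (Set.toFinite M)
    omega
  obtain ⟨v, hv⟩ := hpriv
  obtain ⟨e, heM, hev⟩ := hMdom v
  have heq : e = s(x₁, x₂) := by
    by_contra h; exact hv e heM h hev
  have hev1 : EvDom G s(x₁, x₂) v := heq ▸ hev
  have hne2 : ¬ EvDom G s(x₂, x₃) v := hv _ he₂ hne'
  have hnadj2 : ¬ G.Adj x₂ v := fun h => hne2 (Or.inr ⟨x₂, by simp, h⟩)
  have hadjv : G.Adj x₁ v := by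
    rcases hev1 with h | ⟨u, hu, hadj⟩
    · rw [Sym2.mem_iff] at h
      rcases h with rfl | rfl
      · exact absurd (Or.inr ⟨x₂, by simp, hadj12.symm⟩) hne2
      · exact absurd (Or.inl (by simp)) hne2
    · rw [Sym2.mem_iff] at hu
      rcases hu with rfl | rfl
      · exact hadj
      · exact absurd hadj hnadj2
  refine ⟨v, hadjv.symm, hev1, hv, ?_⟩
  have hset' : IsEvDomSet G ((M \ {s(x₁, x₂)}) ∪ {s(v, x₁)}) := by
    constructor
    · intro f hf
      rcases hf with hf | hf
      · exact hMsub hf.1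
      · simp only [Set.mem_singleton_iff] at hf
        subst hf
        exact hadjv.symm
    · intro w
      obtain ⟨f, hfM, hfd⟩ := hMdom w
      by_cases hfe : f = s(x₁, x₂)
      · subst hfe
        rcases hfd with h | ⟨u, hu, hadj⟩
        · rw [Sym2.mem_iff] at h
          rcases h with h | h
          · exact ⟨s(v, x₁), Or.inr rfl, Or.inl (by simp [h])⟩
          · exact ⟨s(x₂, x₃), Or.inl ⟨he₂, hne'⟩, Or.inl (by simp [h])⟩
        · rw [Sym2.mem_iff] at hu
          rcases hu with h | h
          · exact ⟨s(v, x₁), Or.inr rfl, Or.inr ⟨u, by simp [h], hadj⟩⟩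
          · exact ⟨s(x₂, x₃), Or.inl ⟨he₂, hne'⟩, Or.inr ⟨u, by simp [h], hadj⟩⟩
      · exact ⟨f, Or.inl ⟨hfM, hfe⟩, hfd⟩
  have hle : ((M \ {s(x₁, x₂)}) ∪ {s(v, x₁)}).ncard ≤ M.ncard := by
    have h1 : ((M \ {s(x₁, x₂)}) ∪ {s(v, x₁)}) = insert s(v, x₁) (M \ {s(x₁, x₂)}) := by
      rw [Set.union_singleton]
    rw [h1]
    have h2 := Set.ncard_insert_le s(v, x₁) (M \ {s(x₁, x₂)})
    have h3 : (M \ {s(x₁, x₂)}).ncard < M.ncard :=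
      Set.ncard_diff_singleton_lt_of_mem he₁ (Set.toFinite M)
    omega
  have hge := hMmin _ hset'
  exact ⟨hset', fun M'' hM'' => le_trans (le_antisymm hle hge).le (hMmin M'' hM'')⟩
end

section
/- Let G be the graph on eight vertices obtained from a cycle c₁c₂c₃c₄ of length four by attaching one pendant vertex xᵢ to each cycle vertex cᵢ (i.e., V = {c₁, c₂, c₃, c₄, x₁, x₂, x₃, x₄} and E = {c₁c₂, c₂c₃, c₃c₄, c₄c₁, c₁x₁, c₂x₂, c₃x₃, c₄x₄}). Then G has a unique minimum paired-dominating set, namely {c₁, c₂, c₃, c₄}, while G has more than one minimum ev-dominating set; moreover, every minimum ev-dominating set M of G satisfies V_G(M) = {c₁, c₂, c₃, c₄}. -/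
open SimpleGraph

variable {V : Type*}

/-- The 4-cycle `c₁c₂c₃c₄` (vertices `0,1,2,3`) with a pendant vertex `xᵢ = i + 4`
attached to each cycle vertex `cᵢ = i`. -/
def G17 : SimpleGraph (Fin 8) :=
  SimpleGraph.fromEdgeSet
    {s(0, 1), s(1, 2), s(2, 3), s(3, 0), s(0, 4), s(1, 5), s(2, 6), s(3, 7)}

section Aux

set_option synthInstance.maxSize 5000
set_option maxHeartbeats 1000000

private def adjB (a b : Fin 8) : Bool :=
  ((a,b) ∈ [((0:Fin 8),(1:Fin 8)),(1,2),(2,3),(3,0),(0,4),(1,5),(2,6),(3,7)]) ||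
  ((b,a) ∈ [((0:Fin 8),(1:Fin 8)),(1,2),(2,3),(3,0),(0,4),(1,5),(2,6),(3,7)])

private lemma adj_iff (a b : Fin 8) : G17.Adj a b ↔ adjB a b = true := by
  simp only [G17, SimpleGraph.fromEdgeSet_adj, Set.mem_insert_iff, Set.mem_singleton_iff,
    Sym2.eq_iff, adjB]
  revert a b
  decide

private instance instAdjDec : DecidableRel G17.Adj :=
  fun a b => decidable_of_iff _ (adj_iff a b).symm

private lemma evDom_pair (a b v : Fin 8) :
    EvDom G17 s(a,b) v ↔ (v = a ∨ v = b ∨ G17.Adj a v ∨ G17.Adj b v) := by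
  simp only [EvDom, Sym2.mem_iff]
  constructor
  · rintro (h | ⟨u, (rfl|rfl), h⟩) <;> tauto
  · rintro (rfl | rfl | h | h)
    · tauto
    · tauto
    · exact Or.inr ⟨a, Or.inl rfl, h⟩
    · exact Or.inr ⟨b, Or.inr rfl, h⟩

private lemma le_ncard_of_finset (s : Finset (Fin 8)) {D : Set (Fin 8)} (h : ∀ x ∈ s, x ∈ D) :
    s.card ≤ D.ncard := by
  have hsub : (↑s : Set (Fin 8)) ⊆ D := h
  simpa [Set.ncard_coe_finset] using Set.ncard_le_ncard hsub (Set.toFinite D)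

private lemma four_le {D : Set (Fin 8)} {a b c d : Fin 8}
    (ha : a ∈ D) (hb : b ∈ D) (hc : c ∈ D) (hd : d ∈ D)
    (hab : a ≠ b) (hac : a ≠ c) (had : a ≠ d) (hbc : b ≠ c) (hbd : b ≠ d) (hcd : c ≠ d) :
    4 ≤ D.ncard := by
  have hcard : ({a,b,c,d} : Finset (Fin 8)).card = 4 := by
    rw [Finset.card_insert_of_notMem (by simp [hab, hac, had]),
      Finset.card_insert_of_notMem (by simp [hbc, hbd]),
      Finset.card_insert_of_notMem (by simp [hcd]), Finset.card_singleton]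
  calc (4:ℕ) = ({a,b,c,d} : Finset (Fin 8)).card := hcard.symm
    _ ≤ D.ncard := le_ncard_of_finset _ (by
        intro x hx
        simp only [Finset.mem_insert, Finset.mem_singleton] at hx
        rcases hx with rfl|rfl|rfl|rfl <;> assumption)

private lemma five_le {D : Set (Fin 8)} {a b c d e : Fin 8}
    (ha : a ∈ D) (hb : b ∈ D) (hc : c ∈ D) (hd : d ∈ D) (he : e ∈ D)
    (hab : a ≠ b) (hac : a ≠ c) (had : a ≠ d) (hae : a ≠ e)
    (hbc : b ≠ c) (hbd : b ≠ d) (hbe : b ≠ e) (hcd : c ≠ d) (hce : c ≠ e) (hde : d ≠ e) :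
    5 ≤ D.ncard := by
  have hcard : ({a,b,c,d,e} : Finset (Fin 8)).card = 5 := by
    rw [Finset.card_insert_of_notMem (by simp [hab, hac, had, hae]),
      Finset.card_insert_of_notMem (by simp [hbc, hbd, hbe]),
      Finset.card_insert_of_notMem (by simp [hcd, hce]),
      Finset.card_insert_of_notMem (by simp [hde]), Finset.card_singleton]
  calc (5:ℕ) = ({a,b,c,d,e} : Finset (Fin 8)).card := hcard.symm
    _ ≤ D.ncard := le_ncard_of_finset _ (by
        intro x hx
        simp only [Finset.mem_insert, Finset.mem_singleton] at hx
        rcases hx with rfl|rfl|rfl|rfl|rfl <;> assumption)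

private lemma keyC : ∀ a b c d : Fin 8, G17.Adj a b → G17.Adj c d →
    (∀ v, (v = a ∨ v = b ∨ G17.Adj a v ∨ G17.Adj b v) ∨
          (v = c ∨ v = d ∨ G17.Adj c v ∨ G17.Adj d v)) →
    ∀ v : Fin 8, ((v = a ∨ v = b) ∨ (v = c ∨ v = d)) ↔ (v = 0 ∨ v = 1 ∨ v = 2 ∨ v = 3) := by
  decide

private lemma miss : ∀ a b : Fin 8, G17.Adj a b →
    ∃ v, ¬(v = a ∨ v = b ∨ G17.Adj a v ∨ G17.Adj b v) := by decide

private lemma pend : ∀ u : Fin 8, (G17.Adj u 4 → u = 0) ∧ (G17.Adj u 5 → u = 1) ∧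
    (G17.Adj u 6 → u = 2) ∧ (G17.Adj u 7 → u = 3) := by decide

private lemma dom_lb {D : Set (Fin 8)} (hD : IsDomSet G17 D) : 4 ≤ D.ncard := by
  have h0 : (0:Fin 8) ∈ D ∨ (4:Fin 8) ∈ D := by
    by_cases h : (4:Fin 8) ∈ D
    · exact Or.inr h
    · obtain ⟨u, hu, hadj⟩ := hD 4 h
      exact Or.inl (((pend u).1 hadj) ▸ hu)
  have h1 : (1:Fin 8) ∈ D ∨ (5:Fin 8) ∈ D := by
    by_cases h : (5:Fin 8) ∈ D
    · exact Or.inr h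
    · obtain ⟨u, hu, hadj⟩ := hD 5 h
      exact Or.inl (((pend u).2.1 hadj) ▸ hu)
  have h2 : (2:Fin 8) ∈ D ∨ (6:Fin 8) ∈ D := by
    by_cases h : (6:Fin 8) ∈ D
    · exact Or.inr h
    · obtain ⟨u, hu, hadj⟩ := hD 6 h
      exact Or.inl (((pend u).2.2.1 hadj) ▸ hu)
  have h3 : (3:Fin 8) ∈ D ∨ (7:Fin 8) ∈ D := by
    by_cases h : (7:Fin 8) ∈ D
    · exact Or.inr h
    · obtain ⟨u, hu, hadj⟩ := hD 7 h
      exact Or.inl (((pend u).2.2.2 hadj) ▸ hu)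
  rcases h0 with h0 | h0 <;> rcases h1 with h1 | h1 <;> rcases h2 with h2 | h2 <;>
    rcases h3 with h3 | h3 <;>
    exact four_le h0 h1 h2 h3 (by decide) (by decide) (by decide) (by decide) (by decide)
      (by decide)

private lemma ncard0123 : ({0,1,2,3} : Set (Fin 8)).ncard = 4 := by
  rw [show ({0,1,2,3} : Set (Fin 8)) = (↑({0,1,2,3} : Finset (Fin 8)) : Set (Fin 8)) by simp,
    Set.ncard_coe_finset]
  decide

private lemma pdsD : IsPairedDomSet G17 {0,1,2,3} := by
  constructor
  · intro v hv
    have hall : ∀ v : Fin 8, ∃ u, (u = 0 ∨ u = 1 ∨ u = 2 ∨ u = 3) ∧ G17.Adj u v := by decide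
    obtain ⟨u, hu, hadj⟩ := hall v
    refine ⟨u, ?_, hadj⟩
    simp only [Set.mem_insert_iff, Set.mem_singleton_iff]
    exact hu
  · refine ⟨{s(0,1), s(2,3)}, ?_, ?_, ?_⟩
    · intro e he
      simp only [Set.mem_insert_iff, Set.mem_singleton_iff] at he
      rcases he with rfl | rfl <;> exact G17.mem_edgeSet.mpr (by decide)
    · intro e he v hv
      simp only [Set.mem_insert_iff, Set.mem_singleton_iff] at he
      simp only [Set.mem_insert_iff, Set.mem_singleton_iff]
      rcases he with rfl | rfl <;> rcases Sym2.mem_iff.mp hv with rfl | rfl <;> tauto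
    · intro v hv
      simp only [Set.mem_insert_iff, Set.mem_singleton_iff] at hv
      have u1 : ∀ f, (f ∈ ({s(0,1), s(2,3)} : Set (Sym2 (Fin 8))) ∧ (0:Fin 8) ∈ f) → f = s(0,1) := by
        rintro f ⟨hf, hvf⟩
        simp only [Set.mem_insert_iff, Set.mem_singleton_iff] at hf
        rcases hf with rfl | rfl
        · rfl
        · exact absurd (Sym2.mem_iff.mp hvf) (by decide)
      have u2 : ∀ f, (f ∈ ({s(0,1), s(2,3)} : Set (Sym2 (Fin 8))) ∧ (1:Fin 8) ∈ f) → f = s(0,1) := by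
        rintro f ⟨hf, hvf⟩
        simp only [Set.mem_insert_iff, Set.mem_singleton_iff] at hf
        rcases hf with rfl | rfl
        · rfl
        · exact absurd (Sym2.mem_iff.mp hvf) (by decide)
      have u3 : ∀ f, (f ∈ ({s(0,1), s(2,3)} : Set (Sym2 (Fin 8))) ∧ (2:Fin 8) ∈ f) → f = s(2,3) := by
        rintro f ⟨hf, hvf⟩
        simp only [Set.mem_insert_iff, Set.mem_singleton_iff] at hf
        rcases hf with rfl | rfl
        · exact absurd (Sym2.mem_iff.mp hvf) (by decide)
        · rfl
      have u4 : ∀ f, (f ∈ ({s(0,1), s(2,3)} : Set (Sym2 (Fin 8))) ∧ (3:Fin 8) ∈ f) → f = s(2,3) := by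
        rintro f ⟨hf, hvf⟩
        simp only [Set.mem_insert_iff, Set.mem_singleton_iff] at hf
        rcases hf with rfl | rfl
        · exact absurd (Sym2.mem_iff.mp hvf) (by decide)
        · rfl
      rcases hv with rfl | rfl | rfl | rfl
      · exact ⟨s(0,1), ⟨Set.mem_insert _ _, Sym2.mem_iff.mpr (Or.inl rfl)⟩, u1⟩
      · exact ⟨s(0,1), ⟨Set.mem_insert _ _, Sym2.mem_iff.mpr (Or.inr rfl)⟩, u2⟩
      · exact ⟨s(2,3), ⟨by simp, Sym2.mem_iff.mpr (Or.inl rfl)⟩, u3⟩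
      · exact ⟨s(2,3), ⟨by simp, Sym2.mem_iff.mpr (Or.inr rfl)⟩, u4⟩

private lemma pendant_forces {D : Set (Fin 8)} {M : Set (Sym2 (Fin 8))} (hM : IsPMOn G17 D M)
    {p c : Fin 8} (hp : p ∈ D) (hpc : ∀ u, G17.Adj u p → u = c) : c ∈ D := by
  obtain ⟨e, ⟨heM, hpe⟩, -⟩ := hM.2.2 p hp
  have he : e ∈ G17.edgeSet := hM.1 heM
  have hD := hM.2.1 e heM
  induction e using Sym2.ind with
  | _ a b =>
    rw [SimpleGraph.mem_edgeSet] at he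
    rcases Sym2.mem_iff.mp hpe with rfl | rfl
    · have hb : b = c := hpc b he.symm
      exact hb ▸ hD b (Sym2.mem_iff.mpr (Or.inr rfl))
    · have ha : a = c := hpc a he
      exact ha ▸ hD a (Sym2.mem_iff.mpr (Or.inl rfl))

private lemma evds1 : IsEvDomSet G17 {s(0,1), s(2,3)} := by
  constructor
  · intro e he
    simp only [Set.mem_insert_iff, Set.mem_singleton_iff] at he
    rcases he with rfl | rfl <;> exact G17.mem_edgeSet.mpr (by decide)
  · intro v
    have hall : ∀ v : Fin 8, (v = 0 ∨ v = 1 ∨ G17.Adj 0 v ∨ G17.Adj 1 v) ∨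
        (v = 2 ∨ v = 3 ∨ G17.Adj 2 v ∨ G17.Adj 3 v) := by decide
    rcases hall v with h | h
    · exact ⟨s(0,1), Set.mem_insert _ _, (evDom_pair _ _ _).mpr h⟩
    · exact ⟨s(2,3), by simp, (evDom_pair _ _ _).mpr h⟩

private lemma evds2 : IsEvDomSet G17 {s(1,2), s(3,0)} := by
  constructor
  · intro e he
    simp only [Set.mem_insert_iff, Set.mem_singleton_iff] at he
    rcases he with rfl | rfl <;> exact G17.mem_edgeSet.mpr (by decide)
  · intro v
    have hall : ∀ v : Fin 8, (v = 1 ∨ v = 2 ∨ G17.Adj 1 v ∨ G17.Adj 2 v) ∨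
        (v = 3 ∨ v = 0 ∨ G17.Adj 3 v ∨ G17.Adj 0 v) := by decide
    rcases hall v with h | h
    · exact ⟨s(1,2), Set.mem_insert _ _, (evDom_pair _ _ _).mpr h⟩
    · exact ⟨s(3,0), by simp, (evDom_pair _ _ _).mpr h⟩

private lemma ev_lb {M : Set (Sym2 (Fin 8))} (h : IsEvDomSet G17 M) : 2 ≤ M.ncard := by
  by_contra hlt
  push_neg at hlt
  have hcase : M.ncard = 0 ∨ M.ncard = 1 := by omega
  rcases hcase with h0 | h1
  · have hM : M = ∅ := (Set.ncard_eq_zero (Set.toFinite M)).mp h0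
    obtain ⟨e, he, -⟩ := h.2 0
    rw [hM] at he
    exact he
  · obtain ⟨e, hM⟩ := Set.ncard_eq_one.mp h1
    have heM : e ∈ M := by rw [hM]; rfl
    have he : e ∈ G17.edgeSet := h.1 heM
    induction e using Sym2.ind with
    | _ a b =>
      rw [SimpleGraph.mem_edgeSet] at he
      obtain ⟨v, hv⟩ := miss a b he
      obtain ⟨f, hf, hevf⟩ := h.2 v
      rw [hM, Set.mem_singleton_iff] at hf
      subst hf
      exact hv ((evDom_pair a b v).mp hevf)

end Aux

set_option maxHeartbeats 1000000 in
theorem stmt17 :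
    (IsMinPairedDomSet G17 {0, 1, 2, 3} ∧
      ∀ D : Set (Fin 8), IsMinPairedDomSet G17 D → D = {0, 1, 2, 3}) ∧
    (∃ M M' : Set (Sym2 (Fin 8)), IsMinEvDomSet G17 M ∧ IsMinEvDomSet G17 M' ∧ M ≠ M') ∧
    (∀ M : Set (Sym2 (Fin 8)), IsMinEvDomSet G17 M → edgeVerts M = {0, 1, 2, 3}) := by
  refine ⟨⟨⟨pdsD, fun D' hD' => ?_⟩, ?_⟩, ⟨{s(0,1), s(2,3)}, {s(1,2), s(3,0)}, ?_, ?_, ?_⟩, ?_⟩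
  · rw [ncard0123]
    exact dom_lb hD'.1
  · -- uniqueness of minimum paired dominating set
    intro D hD
    obtain ⟨⟨hDdom, M, hM⟩, hmin⟩ := hD
    have hle : D.ncard ≤ 4 := by
      have := hmin {0,1,2,3} pdsD
      rwa [ncard0123] at this
    have h0 : (0:Fin 8) ∈ D := by
      by_cases h : (4:Fin 8) ∈ D
      · exact pendant_forces hM h (fun u hu => (pend u).1 hu)
      · obtain ⟨u, hu, hadj⟩ := hDdom 4 h
        exact ((pend u).1 hadj) ▸ hu
    have h1 : (1:Fin 8) ∈ D := by
      by_cases h : (5:Fin 8) ∈ D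
      · exact pendant_forces hM h (fun u hu => (pend u).2.1 hu)
      · obtain ⟨u, hu, hadj⟩ := hDdom 5 h
        exact ((pend u).2.1 hadj) ▸ hu
    have h2 : (2:Fin 8) ∈ D := by
      by_cases h : (6:Fin 8) ∈ D
      · exact pendant_forces hM h (fun u hu => (pend u).2.2.1 hu)
      · obtain ⟨u, hu, hadj⟩ := hDdom 6 h
        exact ((pend u).2.2.1 hadj) ▸ hu
    have h3 : (3:Fin 8) ∈ D := by
      by_cases h : (7:Fin 8) ∈ D
      · exact pendant_forces hM h (fun u hu => (pend u).2.2.2 hu)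
      · obtain ⟨u, hu, hadj⟩ := hDdom 7 h
        exact ((pend u).2.2.2 hadj) ▸ hu
    refine Set.Subset.antisymm ?_ ?_
    · intro v hv
      by_contra hv'
      simp only [Set.mem_insert_iff, Set.mem_singleton_iff, not_or] at hv'
      obtain ⟨n0, n1, n2, n3⟩ := hv'
      have h5 : 5 ≤ D.ncard :=
        five_le h0 h1 h2 h3 hv (by decide) (by decide) (by decide)
          (fun h => n0 h.symm) (by decide) (by decide) (fun h => n1 h.symm)
          (by decide) (fun h => n2 h.symm) (fun h => n3 h.symm)
      omega
    · intro v hv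
      simp only [Set.mem_insert_iff, Set.mem_singleton_iff] at hv
      rcases hv with rfl | rfl | rfl | rfl <;> assumption
  · exact ⟨evds1, fun M' hM' => by
      rw [Set.ncard_pair (by decide : s((0:Fin 8),(1:Fin 8))  ≠ s(2,3))]
      exact ev_lb hM'⟩
  · exact ⟨evds2, fun M' hM' => by
      rw [Set.ncard_pair (by decide : s((1:Fin 8),(2:Fin 8)) ≠ s(3,0))]
      exact ev_lb hM'⟩
  · intro h
    have hmem : s((0:Fin 8),(1:Fin 8)) ∈ ({s(1,2), s(3,0)} : Set (Sym2 (Fin 8))) :=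
      h ▸ Set.mem_insert _ _
    simp only [Set.mem_insert_iff, Set.mem_singleton_iff] at hmem
    exact absurd hmem (by decide)
  · -- every minimum ev-dominating set has edgeVerts = {0,1,2,3}
    intro M hM
    have hub : M.ncard ≤ 2 := by
      have := hM.2 {s(0,1), s(2,3)} evds1
      rwa [Set.ncard_pair (by decide : s((0:Fin 8),(1:Fin 8)) ≠ s(2,3))] at this
    have h2 : M.ncard = 2 := le_antisymm hub (ev_lb hM.1)
    obtain ⟨e, f, hef, hMef⟩ := Set.ncard_eq_two.mp h2
    subst hMef
    have he : e ∈ G17.edgeSet := hM.1.1 (Set.mem_insert _ _)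
    have hf : f ∈ G17.edgeSet := hM.1.1 (by simp)
    have hdomall := hM.1.2
    induction e using Sym2.ind with
    | _ a b =>
      induction f using Sym2.ind with
      | _ c d =>
        rw [SimpleGraph.mem_edgeSet] at he hf
        have hdom : ∀ v, (v = a ∨ v = b ∨ G17.Adj a v ∨ G17.Adj b v) ∨
            (v = c ∨ v = d ∨ G17.Adj c v ∨ G17.Adj d v) := by
          intro v
          obtain ⟨g, hg, hevg⟩ := hdomall v
          simp only [Set.mem_insert_iff, Set.mem_singleton_iff] at hg
          rcases hg with rfl | rfl
          · exact Or.inl ((evDom_pair _ _ _).mp hevg)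
          · exact Or.inr ((evDom_pair _ _ _).mp hevg)
        have hkey := keyC a b c d he hf hdom
        ext v
        simp only [edgeVerts, Set.mem_setOf_eq, Set.mem_insert_iff, Set.mem_singleton_iff,
          Sym2.mem_iff]
        have := hkey v
        constructor
        · rintro ⟨g, (rfl | rfl), hg⟩
          · exact this.mp (Or.inl (Sym2.mem_iff.mp hg))
          · exact this.mp (Or.inr (Sym2.mem_iff.mp hg))
        · intro hv
          rcases this.mpr hv with (h | h) | (h | h)
          · exact ⟨s(a,b), Or.inl rfl, Sym2.mem_iff.mpr (Or.inl h)⟩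
          · exact ⟨s(a,b), Or.inl rfl, Sym2.mem_iff.mpr (Or.inr h)⟩
          · exact ⟨s(c,d), Or.inr rfl, Sym2.mem_iff.mpr (Or.inl h)⟩
          · exact ⟨s(c,d), Or.inr rfl, Sym2.mem_iff.mpr (Or.inr h)⟩
end
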